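/- Let G be a finite connected simple graph and let G_s be its spike graph. Then b(T(G_s)) = b(G) + 1, where T(G_s) is the total graph of G_s. -/

import Mathlib

open SimpleGraph

/-- `b` is a burning sequence of length `k` for `G`: the source `b i` is burned at time `i + 1`
(for `i : Fin k`), and every vertex must be within distance `k - (i + 1)` of some source `b i`
(expressed via the existence of a short enough walk, so that unreachable vertices are never
considered burned). -/
def IsBurningSeq {V : Type*} (G : SimpleGraph V) {k : ℕ} (b : Fin k → V) : Prop :=
  ∀ v : V, ∃ i : Fin k, ∃ w : G.Walk v (b i), w.length + (i : ℕ) + 1 ≤ k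

/-- The burning number of `G`: the least `k` admitting a burning sequence of length `k`. -/
noncomputable def burningNumber {V : Type*} (G : SimpleGraph V) : ℕ :=
  sInf {k : ℕ | ∃ b : Fin k → V, IsBurningSeq G b}

/-- The total graph of `G`, on vertex set `V ⊕ E(G)`: two vertices of `G` are adjacent iff
adjacent in `G`; two edges are adjacent iff distinct and sharing an endpoint; a vertex and
an edge are adjacent iff the vertex is an endpoint of the edge. -/
def totalGraph {V : Type*} (G : SimpleGraph V) : SimpleGraph (V ⊕ G.edgeSet) :=
  SimpleGraph.fromRel (fun x y =>
    match x, y with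
    | Sum.inl u, Sum.inl v => G.Adj u v
    | Sum.inr e, Sum.inr f => ∃ v : V, v ∈ (e : Sym2 V) ∧ v ∈ (f : Sym2 V)
    | Sum.inl v, Sum.inr e => v ∈ (e : Sym2 V)
    | Sum.inr _, Sum.inl _ => False)

/-- The spike graph of `G`: for each vertex `v` of `G` (kept as `Sum.inl v`) a new pendant
vertex `Sum.inr v` is added, adjacent only to `v`. -/
def spikeGraph {V : Type*} (G : SimpleGraph V) : SimpleGraph (V ⊕ V) :=
  SimpleGraph.fromRel (fun x y =>
    match x, y with
    | Sum.inl u, Sum.inl v => G.Adj u v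
    | Sum.inl v, Sum.inr w => v = w
    | _, _ => False)

/-! Upper bound: a burning sequence of `G`, read inside `T(Gₛ)` and followed by one arbitrary
source, burns `T(Gₛ)`, since every element of `T(Gₛ)` is equal or adjacent to a vertex of `G`.

Lower bound: send each source of a burning sequence of `T(Gₛ)` to one of its ends, collapsed
onto `G`. One step of `T(Gₛ)` moves an end by at most one step of `Gₛ`, and a pendant vertex
`l_v` lies one step beyond `v`, so whenever `l_v` is burned by a source other than itself, `v` is
burned one round earlier by the projected source; this lets the last source be dropped. The
exception is a last source equal to some `l_v`: then the pendant edge `v l_v` is burned by an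
earlier source, whose projection is chosen as its end nearest to `v`. -/

open Sum

namespace SimpleGraph.Walk

variable {V W : Type*} {G : SimpleGraph V} {H : SimpleGraph W}

theorem exists_related_walk_length_le (R : V → W → Prop)
    (hR : ∀ ⦃u u' w⦄, G.Adj u u' → R u w → ∃ w', R u' w' ∧ (w = w' ∨ H.Adj w w'))
    {u v : V} (p : G.Walk u v) {w : W} (hw : R u w) :
    ∃ w', R v w' ∧ ∃ q : H.Walk w w', q.length ≤ p.length := by
  induction p generalizing w with
  | nil => exact ⟨w, hw, .nil, le_rfl⟩
  | cons h _ ih =>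
    obtain ⟨w₁, hw₁, rfl | hadj⟩ := hR h hw
    · obtain ⟨w', hw', q, hq⟩ := ih hw₁
      exact ⟨w', hw', q, by rw [length_cons]; omega⟩
    · obtain ⟨w', hw', q, hq⟩ := ih hw₁
      exact ⟨w', hw', .cons hadj q, by simpa using hq⟩

end SimpleGraph.Walk

section Burning

variable {V W : Type*} {G : SimpleGraph V} {k : ℕ}

theorem IsBurningSeq.burningNumber_le {b : Fin k → V} (hb : IsBurningSeq G b) :
    burningNumber G ≤ k :=
  Nat.sInf_le ⟨b, hb⟩

theorem IsBurningSeq.pos {b : Fin k → V} (hb : IsBurningSeq G b) (v : V) : 0 < k :=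
  (hb v).choose.pos

theorem exists_isBurningSeq_burningNumber [Finite V] (G : SimpleGraph V) :
    ∃ b : Fin (burningNumber G) → V, IsBurningSeq G b :=
  Nat.sInf_mem (s := {k | ∃ b : Fin k → V, IsBurningSeq G b})
    ⟨Nat.card V, (Finite.equivFin V).symm, fun v =>
      ⟨Finite.equivFin V v, Walk.nil.copy rfl (Equiv.symm_apply_apply _ v).symm,
        by simp⟩⟩

theorem IsBurningSeq.snoc_comp {H : SimpleGraph W} (φ : G →g H)
    (hφ : ∀ z, ∃ u, z = φ u ∨ H.Adj z (φ u)) {b : Fin k → V} (hb : IsBurningSeq G b)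
    (z₀ : W) :
    IsBurningSeq H (Fin.snoc (α := fun _ => W) (φ ∘ b) z₀) := by
  intro z
  obtain ⟨u, hu⟩ := hφ z
  obtain ⟨i, w, hw⟩ := hb u
  refine ⟨i.castSucc, ?_⟩
  rw [Fin.snoc_castSucc, Function.comp_apply]
  rcases hu with rfl | hadj
  · exact ⟨w.map φ, by rw [Walk.length_map, Fin.val_castSucc]; omega⟩
  · refine ⟨.cons hadj (w.map φ), ?_⟩
    rw [Walk.length_cons, Walk.length_map, Fin.val_castSucc]
    omega

theorem isBurningSeq_castSucc_of_forall {b : Fin (k + 1) → V}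
    (hb : ∀ v, ∃ i : Fin (k + 1), ∃ w : G.Walk v (b i), w.length + i + 1 ≤ k) :
    IsBurningSeq G (fun j : Fin k => b j.castSucc) := by
  intro v
  obtain ⟨i, w, hw⟩ := hb v
  have hi : (i : ℕ) < k := by omega
  obtain ⟨j, rfl⟩ : ∃ j : Fin k, j.castSucc = i := ⟨i.castLT hi, Fin.castSucc_castLT i hi⟩
  exact ⟨j, w, by simpa using hw⟩

end Burning

namespace totalGraph

variable {V : Type*} {K : SimpleGraph V}

@[simp]
theorem adj_inl_inl {a b : V} : (totalGraph K).Adj (inl a) (inl b) ↔ K.Adj a b := by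
  simp only [totalGraph, fromRel_adj, ne_eq, inl.injEq, K.adj_comm b, or_self,
    and_iff_right_iff_imp]
  exact Adj.ne

@[simp]
theorem adj_inl_inr {a : V} {e : K.edgeSet} :
    (totalGraph K).Adj (inl a) (inr e) ↔ a ∈ (e : Sym2 V) := by
  simp [totalGraph]

@[simp]
theorem adj_inr_inl {a : V} {e : K.edgeSet} :
    (totalGraph K).Adj (inr e) (inl a) ↔ a ∈ (e : Sym2 V) := by
  simp [totalGraph]

@[simp]
theorem adj_inr_inr {e f : K.edgeSet} :
    (totalGraph K).Adj (inr e) (inr f) ↔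
      e ≠ f ∧ ∃ m, m ∈ (e : Sym2 V) ∧ m ∈ (f : Sym2 V) := by
  simp only [totalGraph, fromRel_adj, ne_eq, inr.injEq]
  exact and_congr_right fun _ => or_iff_left_of_imp fun ⟨m, hf, he⟩ => ⟨m, he, hf⟩

def inlHom (K : SimpleGraph V) : K →g totalGraph K where
  toFun := inl
  map_rel' := adj_inl_inl.2

def ends (K : SimpleGraph V) : V ⊕ K.edgeSet → Set V
  | inl a => {a}
  | inr e => {x | x ∈ (e : Sym2 V)}

@[simp]
theorem mem_ends_inl {x a : V} : x ∈ ends K (inl a) ↔ x = a := Iff.rfl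

@[simp]
theorem mem_ends_inr {x : V} {e : K.edgeSet} : x ∈ ends K (inr e) ↔ x ∈ (e : Sym2 V) :=
  Iff.rfl

theorem ends_nonempty (z : V ⊕ K.edgeSet) : (ends K z).Nonempty := by
  rcases z with a | e
  · exact ⟨a, rfl⟩
  · exact ⟨(e : Sym2 V).out.1, Sym2.out_fst_mem _⟩

theorem eq_or_adj_of_mem_edge {x y : V} {e : K.edgeSet} (hx : x ∈ (e : Sym2 V))
    (hy : y ∈ (e : Sym2 V)) : x = y ∨ K.Adj x y :=
  or_iff_not_imp_left.2 fun hne => K.adj_iff_exists_edge.2 ⟨hne, e, e.2, hx, hy⟩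

theorem exists_mem_ends_eq_or_adj {z z' : V ⊕ K.edgeSet} (h : (totalGraph K).Adj z z') {x : V}
    (hx : x ∈ ends K z) : ∃ x' ∈ ends K z', x = x' ∨ K.Adj x x' := by
  rcases z with a | e <;> rcases z' with b | f <;> simp only [mem_ends_inl, mem_ends_inr] at hx
  · exact ⟨b, rfl, .inr (hx ▸ adj_inl_inl.1 h)⟩
  · exact ⟨a, adj_inl_inr.1 h, .inl hx⟩
  · exact ⟨b, rfl, eq_or_adj_of_mem_edge hx (adj_inr_inl.1 h)⟩
  · obtain ⟨-, m, hme, hmf⟩ := adj_inr_inr.1 h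
    exact ⟨m, hmf, eq_or_adj_of_mem_edge hx hme⟩

theorem exists_mem_ends_of_adj_inr {e : K.edgeSet} {z : V ⊕ K.edgeSet}
    (h : (totalGraph K).Adj (inr e) z) : ∃ y ∈ (e : Sym2 V), y ∈ ends K z := by
  rcases z with a | f
  · exact ⟨a, adj_inr_inl.1 h, rfl⟩
  · obtain ⟨-, m, hme, hmf⟩ := adj_inr_inr.1 h
    exact ⟨m, hme, hmf⟩

theorem exists_walk_of_walk {z z' : V ⊕ K.edgeSet} (p : (totalGraph K).Walk z z') {x : V}
    (hx : x ∈ ends K z) : ∃ x' ∈ ends K z', ∃ q : K.Walk x x', q.length ≤ p.length :=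
  p.exists_related_walk_length_le (fun z x => x ∈ ends K z)
    (fun _ _ _ h hx => exists_mem_ends_eq_or_adj h hx) hx

/-- Leaving an edge costs a step that the walk in `K` does not need. -/
theorem exists_walk_of_walk_inr {e : K.edgeSet} {z : V ⊕ K.edgeSet}
    (p : (totalGraph K).Walk (inr e) z) (hz : z ≠ inr e) :
    ∃ y ∈ (e : Sym2 V), ∃ x ∈ ends K z, ∃ q : K.Walk y x, q.length < p.length := by
  cases p with
  | nil => exact absurd rfl hz
  | cons h p =>
    obtain ⟨y, hye, hy⟩ := exists_mem_ends_of_adj_inr h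
    obtain ⟨x, hx, q, hq⟩ := exists_walk_of_walk p hy
    exact ⟨y, hye, x, hx, q, by rw [Walk.length_cons]; omega⟩

end totalGraph

namespace spikeGraph

variable {V : Type*} {G : SimpleGraph V}

@[simp]
theorem adj_inl_inl {a b : V} : (spikeGraph G).Adj (inl a) (inl b) ↔ G.Adj a b := by
  simp only [spikeGraph, fromRel_adj, ne_eq, inl.injEq, G.adj_comm b, or_self,
    and_iff_right_iff_imp]
  exact Adj.ne

@[simp]
theorem adj_inl_inr {a b : V} : (spikeGraph G).Adj (inl a) (inr b) ↔ a = b := by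
  simp [spikeGraph]

@[simp]
theorem adj_inr_inl {a b : V} : (spikeGraph G).Adj (inr a) (inl b) ↔ a = b := by
  simp [spikeGraph, eq_comm]

@[simp]
theorem not_adj_inr_inr {a b : V} : ¬ (spikeGraph G).Adj (inr a) (inr b) := by
  simp [spikeGraph]

def inlHom (G : SimpleGraph V) : G →g spikeGraph G where
  toFun := inl
  map_rel' := adj_inl_inl.2

theorem exists_inl_mem_of_mem_edgeSet {e : Sym2 (V ⊕ V)} (he : e ∈ (spikeGraph G).edgeSet) :
    ∃ u, inl u ∈ e := by
  induction e using Sym2.ind with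
  | _ x y =>
    rcases x with a | a
    · exact ⟨a, Sym2.mem_mk_left _ _⟩
    · rcases y with b | b
      · exact ⟨b, Sym2.mem_mk_right _ _⟩
      · exact absurd he (by simp)

theorem elim_eq_or_adj {x y : V ⊕ V} (h : (spikeGraph G).Adj x y) :
    Sum.elim id id x = Sum.elim id id y ∨ G.Adj (Sum.elim id id x) (Sum.elim id id y) := by
  rcases x with a | a <;> rcases y with b | b <;> simp_all

theorem exists_walk_elim {x y : V ⊕ V} (p : (spikeGraph G).Walk x y) :
    ∃ q : G.Walk (Sum.elim id id x) (Sum.elim id id y), q.length ≤ p.length := by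
  obtain ⟨_, rfl, q, hq⟩ := p.exists_related_walk_length_le (fun x w => Sum.elim id id x = w)
    (fun _ _ _ h hw => ⟨_, rfl, hw ▸ elim_eq_or_adj h⟩) rfl
  exact ⟨q, hq⟩

theorem exists_walk_elim_of_walk_inr {v : V} {x : V ⊕ V} (p : (spikeGraph G).Walk (inr v) x)
    (hx : x ≠ inr v) : ∃ q : G.Walk v (Sum.elim id id x), q.length < p.length := by
  cases p with
  | nil => exact absurd rfl hx
  | @cons _ y _ h p =>
    rcases y with a | a
    · obtain rfl : v = a := adj_inr_inl.1 h
      obtain ⟨q, hq⟩ := exists_walk_elim p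
      exact ⟨q, hq.trans_lt (by simp)⟩
    · exact absurd h not_adj_inr_inr

end spikeGraph

section TotalSpike

variable {V : Type*} {G : SimpleGraph V}

theorem exists_eq_or_adj_totalGraph_spikeGraph (z : (V ⊕ V) ⊕ (spikeGraph G).edgeSet) :
    ∃ u, z = inl (inl u) ∨ (totalGraph (spikeGraph G)).Adj z (inl (inl u)) := by
  rcases z with (u | u) | e
  · exact ⟨u, .inl rfl⟩
  · exact ⟨u, .inr (by simp)⟩
  · obtain ⟨u, hu⟩ := spikeGraph.exists_inl_mem_of_mem_edgeSet e.2
    exact ⟨u, .inr (totalGraph.adj_inr_inl.2 hu)⟩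

theorem burningNumber_totalGraph_spikeGraph_le [Finite V] [Nonempty V] (G : SimpleGraph V) :
    burningNumber (totalGraph (spikeGraph G)) ≤ burningNumber G + 1 := by
  obtain ⟨b, hb⟩ := exists_isBurningSeq_burningNumber G
  exact (hb.snoc_comp ((totalGraph.inlHom _).comp (spikeGraph.inlHom G))
    exists_eq_or_adj_totalGraph_spikeGraph (inl (inl (Classical.arbitrary V)))).burningNumber_le

theorem exists_walk_elim_of_walk_inl_inr {v : V} {z : (V ⊕ V) ⊕ (spikeGraph G).edgeSet}
    (p : (totalGraph (spikeGraph G)).Walk (inl (inr v)) z) (hz : z ≠ inl (inr v)) {x : V ⊕ V}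
    (hx : x ∈ totalGraph.ends _ z) :
    ∃ q : G.Walk v (Sum.elim id id x), q.length < p.length := by
  obtain ⟨_, rfl, r, hr⟩ := totalGraph.exists_walk_of_walk p.reverse hx
  rw [Walk.length_reverse] at hr
  by_cases hxv : x = inr v
  · subst hxv
    refine ⟨.nil, Nat.pos_of_ne_zero fun h => hz ?_⟩
    exact (Walk.eq_of_length_eq_zero h).symm
  · obtain ⟨q, hq⟩ := spikeGraph.exists_walk_elim_of_walk_inr r.reverse hxv
    exact ⟨q, by rw [Walk.length_reverse] at hq; omega⟩

variable {k : ℕ} {c : Fin (k + 1) → (V ⊕ V) ⊕ (spikeGraph G).edgeSet}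

theorem IsBurningSeq.exists_walk_of_last_ne {x : Fin (k + 1) → V ⊕ V}
    (hc : IsBurningSeq (totalGraph (spikeGraph G)) c) (hx : ∀ i, x i ∈ totalGraph.ends _ (c i))
    {v : V} (hv : c (Fin.last k) ≠ inl (inr v)) :
    ∃ i : Fin (k + 1), ∃ q : G.Walk v (Sum.elim id id (x i)), q.length + i + 1 ≤ k := by
  obtain ⟨i, p, hp⟩ := hc (inl (inr v))
  by_cases hi : c i = inl (inr v)
  · have hik : (i : ℕ) < k := Fin.val_lt_last fun h => hv (h ▸ hi)
    have hxi : x i = inr v := by simpa [hi] using hx i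
    refine ⟨i, ?_⟩
    rw [hxi]
    exact ⟨.nil, by change 0 + (i : ℕ) + 1 ≤ k; omega⟩
  · obtain ⟨q, hq⟩ := exists_walk_elim_of_walk_inl_inr p hi (hx i)
    exact ⟨i, q, by omega⟩

/-- The witness is the source burning the pendant edge at `v`, which the last source `l_v`
cannot burn. -/
theorem IsBurningSeq.exists_walk_of_last_eq (hc : IsBurningSeq (totalGraph (spikeGraph G)) c)
    {v : V} (hv : c (Fin.last k) = inl (inr v)) :
    ∃ i : Fin (k + 1), ∃ y ∈ totalGraph.ends _ (c i), ∃ q : G.Walk v (Sum.elim id id y),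
      q.length + i + 1 ≤ k := by
  let e : (spikeGraph G).edgeSet := ⟨s(inl v, inr v), by simp⟩
  obtain ⟨i, p, hp⟩ := hc (inr e)
  by_cases hi : c i = inr e
  · have hik : (i : ℕ) < k := Fin.val_lt_last fun h => by simp [h ▸ hv] at hi
    exact ⟨i, inl v, by simp [hi, e], .nil, by change 0 + (i : ℕ) + 1 ≤ k; omega⟩
  · obtain ⟨y', hy', y, hy, r, hr⟩ := totalGraph.exists_walk_of_walk_inr p hi
    obtain ⟨q, hq⟩ := spikeGraph.exists_walk_elim r
    have hy'v : Sum.elim id id y' = v := by rcases Sym2.mem_iff.1 hy' with rfl | rfl <;> rfl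
    exact ⟨i, y, hy, q.copy hy'v rfl, by rw [Walk.length_copy]; omega⟩

theorem IsBurningSeq.exists_ends_selection (hc : IsBurningSeq (totalGraph (spikeGraph G)) c) :
    ∃ x : Fin (k + 1) → V ⊕ V, (∀ i, x i ∈ totalGraph.ends _ (c i)) ∧
      ∀ v, c (Fin.last k) = inl (inr v) →
        ∃ i : Fin (k + 1), ∃ q : G.Walk v (Sum.elim id id (x i)), q.length + i + 1 ≤ k := by
  choose x₀ hx₀ using fun i => totalGraph.ends_nonempty (c i)
  by_cases h : ∃ v, c (Fin.last k) = inl (inr v)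
  · obtain ⟨v, hv⟩ := h
    obtain ⟨i, y, hy, q, hq⟩ := hc.exists_walk_of_last_eq hv
    refine ⟨Function.update x₀ i y, fun j => ?_, fun v' hv' => ?_⟩
    · rcases eq_or_ne j i with rfl | hj
      · simpa using hy
      · simpa [hj] using hx₀ j
    · obtain rfl : v = v' := by simpa [hv] using hv'
      refine ⟨i, ?_⟩
      rw [Function.update_self]
      exact ⟨q, hq⟩
  · exact ⟨x₀, hx₀, fun v hv => absurd ⟨v, hv⟩ h⟩

theorem IsBurningSeq.exists_of_totalGraph_spikeGraph
    (hc : IsBurningSeq (totalGraph (spikeGraph G)) c) : ∃ a : Fin k → V, IsBurningSeq G a := by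
  obtain ⟨x, hx, hlast⟩ := hc.exists_ends_selection
  refine ⟨_, isBurningSeq_castSucc_of_forall (b := fun i => Sum.elim id id (x i)) fun v => ?_⟩
  by_cases hv : c (Fin.last k) = inl (inr v)
  · exact hlast v hv
  · exact hc.exists_walk_of_last_ne hx hv

theorem burningNumber_add_one_le_totalGraph_spikeGraph [Finite V] [Nonempty V]
    (G : SimpleGraph V) : burningNumber G + 1 ≤ burningNumber (totalGraph (spikeGraph G)) := by
  obtain ⟨c, hc⟩ := exists_isBurningSeq_burningNumber (totalGraph (spikeGraph G))
  have hpos := hc.pos (inl (inl (Classical.arbitrary V)))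
  generalize burningNumber (totalGraph (spikeGraph G)) = n at c hc hpos ⊢
  obtain ⟨k, rfl⟩ := Nat.exists_eq_add_one_of_ne_zero hpos.ne'
  obtain ⟨a, ha⟩ := hc.exists_of_totalGraph_spikeGraph
  exact Nat.succ_le_succ ha.burningNumber_le

end TotalSpike

/-- For a connected graph `G` with spike graph `Gₛ`, we have `b(T(Gₛ)) = b(G) + 1`. -/
theorem burningNumber_totalGraph_spikeGraph {V : Type*} [Fintype V]
    (G : SimpleGraph V) (hconn : G.Connected) :
    burningNumber (totalGraph (spikeGraph G)) = burningNumber G + 1 := by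
  have := hconn.nonempty
  exact le_antisymm (burningNumber_totalGraph_spikeGraph_le G)
    (burningNumber_add_one_le_totalGraph_spikeGraph G)
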